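/- arXiv:2601.11844 — 2 statements merged into one kernel-verified Lean document; each statement's English description precedes it below -/
import Mathlib

section
/- Let K ≥ 5 and r = ⌊(K-1)/2⌋. Then K(K-1)r/((K-2)r + K-1) < K·(K-2)^2/((K-2)^2+4) when K is even, and K(K-1)r/((K-2)r + K-1) < K·(K-1)(K-2)/((K-1)(K-2)+1) when K is odd; i.e., the non-cooperative SDoF upper bound is strictly smaller than the SDoF achieved by the IA-ZF scheme. -/
/-- For K ≥ 5 and r = ⌊(K-1)/2⌋, the non-cooperative SDoF upper bound
K(K-1)r/((K-2)r + K-1) is strictly smaller than the SDoF achieved by the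
IA-ZF scheme: K·(K-2)^2/((K-2)^2+4) for even K, and
K·(K-1)(K-2)/((K-1)(K-2)+1) for odd K. -/
theorem stmt_9 (K : ℕ) (hK : 5 ≤ K) :
    let r : ℕ := (K - 1) / 2
    (Even K →
      (K : ℚ) * ((K : ℚ) - 1) * r / (((K : ℚ) - 2) * r + ((K : ℚ) - 1))
        < (K : ℚ) * ((K : ℚ) - 2) ^ 2 / (((K : ℚ) - 2) ^ 2 + 4))
    ∧ (Odd K →
      (K : ℚ) * ((K : ℚ) - 1) * r / (((K : ℚ) - 2) * r + ((K : ℚ) - 1))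
        < (K : ℚ) * (((K : ℚ) - 1) * ((K : ℚ) - 2)) / (((K : ℚ) - 1) * ((K : ℚ) - 2) + 1)) := by
  intro r
  constructor
  · rintro ⟨m, rfl⟩
    have hm : 3 ≤ m := by omega
    have hr : r = m - 1 := by simp only [r]; omega
    have hrQ : (r : ℚ) = (m : ℚ) - 1 := by
      rw [hr]; push_cast [Nat.cast_sub (by omega : 1 ≤ m)]; ring
    have hmQ : (3 : ℚ) ≤ (m : ℚ) := by exact_mod_cast hm
    push_cast
    rw [hrQ, div_lt_div_iff₀ (by nlinarith) (by nlinarith)]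
    nlinarith [sq_nonneg ((m:ℚ) - 1), sq_nonneg ((m:ℚ) - 3), mul_pos (by nlinarith : (0:ℚ) < (m:ℚ) - 2) (by nlinarith : (0:ℚ) < (m:ℚ) - 1)]
  · rintro ⟨m, rfl⟩
    have hm : 2 ≤ m := by omega
    have hr : r = m := by simp only [r]; omega
    have hmQ : (2 : ℚ) ≤ (m : ℚ) := by exact_mod_cast hm
    push_cast [hr]
    rw [div_lt_div_iff₀ (by nlinarith) (by nlinarith)]
    nlinarith [sq_nonneg ((m:ℚ) - 2), mul_pos (by nlinarith : (0:ℚ) < (m:ℚ) - 1) (by nlinarith : (0:ℚ) < (m:ℚ))]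
end

section
/- For K ≥ 5 and r = ⌊(K-1)/2⌋, the IA-ZF per-node DoF satisfies: for even K, (K-2)^2/((K-2)^2+4) > r/(r+1), and for odd K, (K-1)(K-2)/((K-1)(K-2)+1) > r/(r+1); i.e., the new scheme strictly exceeds the one-shot beamforming DoF r/(r+1) per node. -/
/-- For K ≥ 5 and r = ⌊(K-1)/2⌋, the IA-ZF per-node DoF strictly exceeds the
one-shot beamforming DoF r/(r+1): for even K, (K-2)^2/((K-2)^2+4) > r/(r+1);
for odd K, (K-1)(K-2)/((K-1)(K-2)+1) > r/(r+1). -/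
theorem stmt_10 (K : ℕ) (hK : 5 ≤ K) :
    let r : ℕ := (K - 1) / 2
    (Even K →
      ((K : ℚ) - 2) ^ 2 / (((K : ℚ) - 2) ^ 2 + 4) > (r : ℚ) / ((r : ℚ) + 1))
    ∧ (Odd K →
      ((K : ℚ) - 1) * ((K : ℚ) - 2) / (((K : ℚ) - 1) * ((K : ℚ) - 2) + 1)
        > (r : ℚ) / ((r : ℚ) + 1)) := by
  intro r
  constructor
  · rintro ⟨m, hm⟩
    have hm3 : 3 ≤ m := by omega
    have hr : r = m - 1 := by omega
    have hrq : (r : ℚ) = (m : ℚ) - 1 := by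
      rw [hr]; push_cast [Nat.cast_sub (by omega : 1 ≤ m)]; ring
    have hKq : (K : ℚ) = 2 * m := by exact_mod_cast congrArg (Nat.cast : ℕ → ℚ) (by omega : K = 2 * m)
    have hmq : (3 : ℚ) ≤ m := by exact_mod_cast hm3
    rw [hKq, hrq, gt_iff_lt, div_lt_div_iff₀ (by nlinarith) (by nlinarith)]
    nlinarith
  · rintro ⟨m, hm⟩
    have hm2 : 2 ≤ m := by omega
    have hr : r = m := by omega
    have hKq : (K : ℚ) = 2 * m + 1 := by
      exact_mod_cast congrArg (Nat.cast : ℕ → ℚ) hm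
    have hmq : (2 : ℚ) ≤ m := by exact_mod_cast hm2
    rw [hKq, hr, gt_iff_lt, div_lt_div_iff₀ (by nlinarith) (by nlinarith)]
    nlinarith
end
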